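/- For a cooperative game with a convex (supermodular) characteristic function u, i.e., u(C∪D) + u(C∩D) ≥ u(C) + u(D) for all coalitions C, D, the core is nonempty; consequently the maximum excess at the nucleolus is at most zero. -/

import Mathlib

/-!
Add the players one at a time and pay each newcomer `j` its marginal contribution
`u (S ∪ {j}) - u S`. Supermodularity says that `j` contributes at least as much to `S` as to
any smaller coalition, so every coalition `C` already present receives at least `u C`: the
marginal vector lies in the core. At a core point every excess is nonpositive, and the
nucleolus, minimizing the largest excess first, can only do better.
-/

open Finset

variable {N : Type*} [Fintype N] [DecidableEq N]

noncomputable def excess (u : Finset N → ℝ) (x : N → ℝ) (C : Finset N) : ℝ :=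
  u C - ∑ i ∈ C, x i

noncomputable def theta (u : Finset N → ℝ) (x : N → ℝ) : List ℝ :=
  ((Finset.univ.powerset.val.map (excess u x)).sort (· ≤ ·)).reverse

def lexLe (a b : List ℝ) : Prop := a = b ∨ List.Lex (· < ·) a b

section Supermodular

variable {ι β : Type*} [DecidableEq ι] [AddCommGroup β] [PartialOrder β] [IsOrderedAddMonoid β]

def IsSupermodular (u : Finset ι → β) : Prop :=
  ∀ C D : Finset ι, u C + u D ≤ u (C ∪ D) + u (C ∩ D)

theorem IsSupermodular.exists_core {u : Finset ι → β} (hsuper : IsSupermodular u)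
    (hu : u ∅ = 0) (S : Finset ι) :
    ∃ x : ι → β, ∑ i ∈ S, x i = u S ∧ ∀ C ⊆ S, u C ≤ ∑ i ∈ C, x i := by
  induction S using Finset.induction_on with
  | empty => exact ⟨0, by simp [hu], fun C hC => by simp [subset_empty.mp hC, hu]⟩
  | insert j S hj ih =>
    obtain ⟨x, hx_sum, hx_core⟩ := ih
    refine ⟨Function.update x j (u (insert j S) - u S), ?_, fun C hC => ?_⟩
    · rw [sum_insert hj, sum_update_of_notMem hj, Function.update_self, hx_sum, sub_add_cancel]
    by_cases hjC : j ∈ C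
    · have hunion : C ∪ S = insert j S := by grind
      have hinter : C ∩ S = C.erase j := by grind
      have hmarginal := hsuper C S
      rw [hunion, hinter] at hmarginal
      rw [← add_sum_erase C _ hjC, sum_update_of_notMem (notMem_erase j C),
        Function.update_self, sub_add_eq_add_sub, le_sub_iff_add_le]
      calc u C + u S ≤ u (insert j S) + u (C.erase j) := hmarginal
        _ ≤ u (insert j S) + ∑ i ∈ C.erase j, x i :=
          add_le_add_right (hx_core _ (hinter ▸ inter_subset_right)) _
    · rw [sum_update_of_notMem hjC]
      exact hx_core C ((subset_insert_iff_of_notMem hjC).mp hC)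

end Supermodular

section Theta

variable {α : Type*} [Fintype α]

theorem mem_theta {u : Finset α → ℝ} {x : α → ℝ} {a : ℝ} :
    a ∈ theta u x ↔ ∃ C : Finset α, excess u x C = a := by
  simp [theta]

theorem theta_ne_nil (u : Finset α → ℝ) (x : α → ℝ) : theta u x ≠ [] :=
  List.ne_nil_of_mem (mem_theta.mpr ⟨∅, rfl⟩)

theorem head_theta_eq_sup' (u : Finset α → ℝ) (x : α → ℝ) :
    (theta u x).head (theta_ne_nil u x) =
      univ.powerset.sup' ⟨∅, empty_mem_powerset _⟩ (excess u x) := by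
  have hsorted : (theta u x).Pairwise (· ≥ ·) :=
    List.pairwise_reverse.mpr (Multiset.pairwise_sort _ _)
  apply le_antisymm
  · obtain ⟨C, hC⟩ := mem_theta.mp (List.head_mem (theta_ne_nil u x))
    exact hC ▸ le_sup' _ (mem_powerset.mpr (subset_univ C))
  · obtain ⟨C, -, hC⟩ := exists_mem_eq_sup' ⟨∅, empty_mem_powerset _⟩ (excess u x)
    exact hC ▸ hsorted.rel_head (mem_theta.mpr ⟨C, rfl⟩)

end Theta

theorem head_le_head_of_lexLe {a b : List ℝ} (h : lexLe a b) (ha : a ≠ []) (hb : b ≠ []) :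
    a.head ha ≤ b.head hb := by
  obtain ⟨a₀, a', rfl⟩ := List.exists_cons_of_ne_nil ha
  obtain ⟨b₀, b', rfl⟩ := List.exists_cons_of_ne_nil hb
  rcases h with h | h
  · exact (List.cons.inj h).1.le
  · exact List.head_le_of_lt h

/-- For a convex (supermodular) characteristic function the core is nonempty;
consequently the maximum excess at the nucleolus (any lexicographic minimizer of the
sorted excess vector over efficient payoffs) is at most zero. -/
theorem supermodular_core_nonempty_and_nucleolus_max_excess_nonpos
    (u : Finset N → ℝ) (hu : u ∅ = 0)
    (hsuper : ∀ C D : Finset N, u C + u D ≤ u (C ∪ D) + u (C ∩ D)) :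
    (∃ x : N → ℝ, (∑ i, x i = u Finset.univ) ∧
      ∀ C : Finset N, u C ≤ ∑ i ∈ C, x i) ∧
    (∀ x : N → ℝ, (∑ i, x i = u Finset.univ) →
      (∀ y : N → ℝ, (∑ i, y i = u Finset.univ) → lexLe (theta u x) (theta u y)) →
      Finset.univ.powerset.sup' ⟨∅, empty_mem_powerset _⟩ (excess u x) ≤ 0) := by
  obtain ⟨x, hx_sum, hx_core⟩ := IsSupermodular.exists_core hsuper hu univ
  refine ⟨⟨x, hx_sum, fun C => hx_core C (subset_univ C)⟩, fun z _ hz_min => ?_⟩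
  calc univ.powerset.sup' _ (excess u z)
      = (theta u z).head (theta_ne_nil u z) := (head_theta_eq_sup' u z).symm
    _ ≤ (theta u x).head (theta_ne_nil u x) :=
      head_le_head_of_lexLe (hz_min x hx_sum) _ _
    _ = univ.powerset.sup' _ (excess u x) := head_theta_eq_sup' u x
    _ ≤ 0 := sup'_le _ _ fun C _ => sub_nonpos.mpr (hx_core C (subset_univ C))
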